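/- arXiv:1503.00307 — 7 statements merged into one kernel-verified Lean document; each statement's English description precedes it below -/
import Mathlib

section
/- Let (u_n) be a (exact) greedy sequence in 𝒦, i.e., a weak greedy sequence with weakness parameter γ = 1. Then for all n ≥ 1, σ_n(𝒦)_H ≤ (2^{n+1}/√3) · d_n(𝒦)_H. -/
open Metric

variable {H : Type*} [NormedAddCommGroup H] [InnerProductSpace ℝ H] [CompleteSpace H]

/-- `greedySpace u n = H_n := span{u_1, …, u_n}` (with `u i` denoting `u_{i+1}`). -/
noncomputable def greedySpace (u : ℕ → H) (n : ℕ) : Submodule ℝ H :=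
  Submodule.span ℝ (u '' {i | i < n})

/-- Greedy error `σ_n(𝒦)_H := sup_{v∈𝒦} dist(v, H_n)`. -/
noncomputable def greedyErr (K : Set H) (u : ℕ → H) (n : ℕ) : ℝ :=
  ⨆ v : K, infDist (v : H) (greedySpace u n : Set H)

/-- A weak greedy sequence in `𝒦` with weakness parameter `γ`:
`dist(u_{n+1}, H_n) ≥ γ · sup_{v∈𝒦} dist(v, H_n)` for all `n ≥ 0`. -/
def IsWeakGreedy (K : Set H) (u : ℕ → H) (γ : ℝ) : Prop :=
  (∀ n, u n ∈ K) ∧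
    ∀ n, γ * greedyErr K u n ≤ infDist (u n) (greedySpace u n : Set H)

/-- Kolmogorov `n`-width
`d_n(𝒦)_H := inf {sup_{v∈𝒦} dist(v, V) : V ⊂ H subspace, dim V ≤ n}`. -/
noncomputable def kolWidth (K : Set H) (n : ℕ) : ℝ :=
  ⨅ V : {V : Submodule ℝ H // FiniteDimensional ℝ V ∧ Module.finrank ℝ V ≤ n},
    ⨆ v : K, infDist (v : H) ((V : Submodule ℝ H) : Set H)

/-!
Let `e j` be the normalized Gram–Schmidt vectors of `u`, so that `H_m = span {e 0, …, e (m-1)}`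
and the matrix `⟪u i, e j⟫` is lower triangular with diagonal entries
`‖gramSchmidt ℝ u j‖ = dist (u j, H_j) ≥ σ_j`. Exact greediness bounds every entry of column `j`
by its diagonal entry, since `|⟪u i, e j⟫| ≤ dist (u i, H_j) ≤ σ_j`.

Given `V` with `dim V ≤ n` and `δ = sup_{v ∈ 𝒦} dist (v, V)`, pick a unit vector
`φ ∈ H_{n+1} ∩ V^⊥` (if `σ_n > 0` then `dim H_{n+1} = n + 1`) and put `c j = ⟪e j, φ⟫`. Row `i`
of the matrix applied to `c` is `⟪u i, φ⟫`, of size at most `dist (u i, V) ≤ δ`, so forward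
substitution gives `σ_n |c i| ≤ ‖gramSchmidt ℝ u i‖ |c i| ≤ 2^i δ`. Summing squares against
`∑ c j ^ 2 = 1` yields `σ_n² ≤ ∑_{j ≤ n} 4^j δ² < 4^{n+1} δ² / 3`.
-/

open Finset InnerProductSpace
open scoped RealInnerProductSpace

section LowerTriangular

variable {M : ℕ → ℕ → ℝ} {c : ℕ → ℝ} {δ : ℝ} {n : ℕ}

theorem mul_abs_le_two_pow_mul_of_lowerTriangular (hM : ∀ i j, j < i → |M i j| ≤ M j j)
    (hrow : ∀ i ≤ n, |∑ j ∈ range (i + 1), c j * M i j| ≤ δ) :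
    ∀ i ≤ n, M i i * |c i| ≤ 2 ^ i * δ := by
  intro i
  induction i using Nat.strong_induction_on with
  | _ i ih =>
  intro hi
  have hprev : ∑ j ∈ range i, |c j * M i j| ≤ ∑ j ∈ range i, 2 ^ j * δ := by
    refine sum_le_sum fun j hj => ?_
    have hji := mem_range.mp hj
    calc |c j * M i j| = |M i j| * |c j| := by rw [abs_mul, mul_comm]
      _ ≤ M j j * |c j| := by gcongr; exact hM i j hji
      _ ≤ 2 ^ j * δ := ih j hji (by omega)
  have hgeom : ∑ j ∈ range i, (2 : ℝ) ^ j * δ = (2 ^ i - 1) * δ := by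
    rw [← sum_mul, geom_sum_eq (by norm_num : (2 : ℝ) ≠ 1)]
    norm_num
  calc M i i * |c i| ≤ |c i * M i i| :=
        (mul_le_mul_of_nonneg_right (le_abs_self _) (abs_nonneg _)).trans_eq
          (by rw [← abs_mul, mul_comm])
    _ = |∑ j ∈ range (i + 1), c j * M i j - ∑ j ∈ range i, c j * M i j| := by
        rw [sum_range_succ, add_sub_cancel_left]
    _ ≤ |∑ j ∈ range (i + 1), c j * M i j| + ∑ j ∈ range i, |c j * M i j| :=
        (abs_sub _ _).trans (by gcongr; exact abs_sum_le_sum_abs _ _)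
    _ ≤ 2 ^ i * δ := by linarith [hrow i hi]

theorem mul_sqrt_three_le_of_sum_sq_eq_one {σ : ℝ} (hσ : 0 ≤ σ)
    (hc : ∑ j ∈ range (n + 1), c j ^ 2 = 1) (h : ∀ j ≤ n, σ * |c j| ≤ 2 ^ j * δ) :
    σ * √3 ≤ 2 ^ (n + 1) * δ := by
  have hδ : 0 ≤ δ := by simpa using (mul_nonneg hσ (abs_nonneg (c 0))).trans (h 0 n.zero_le)
  have hsq : 3 * σ ^ 2 ≤ (4 ^ (n + 1) - 1) * δ ^ 2 := calc
    3 * σ ^ 2 = 3 * ∑ j ∈ range (n + 1), (σ * |c j|) ^ 2 := by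
        simp_rw [mul_pow, sq_abs, ← mul_sum, hc, mul_one]
    _ ≤ 3 * ∑ j ∈ range (n + 1), (2 ^ j * δ) ^ 2 := by
        refine mul_le_mul_of_nonneg_left (sum_le_sum fun j hj => ?_) (by norm_num)
        exact pow_le_pow_left₀ (by positivity) (h j (Nat.lt_succ_iff.mp (mem_range.mp hj))) 2
    _ = (4 ^ (n + 1) - 1) * δ ^ 2 := by
        simp_rw [mul_pow, ← pow_mul, pow_mul', ← sum_mul,
          geom_sum_eq (by norm_num : (2 : ℝ) ^ 2 ≠ 1)]
        norm_num
        ring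
  rw [← pow_le_pow_iff_left₀ (by positivity) (by positivity) two_ne_zero, mul_pow, mul_pow,
    Real.sq_sqrt (by norm_num), ← pow_mul, pow_mul']
  norm_num
  nlinarith [sq_nonneg δ]

end LowerTriangular

section InnerProductSpace

variable {𝕜 E : Type*} [RCLike 𝕜] [NormedAddCommGroup E] [InnerProductSpace 𝕜 E]

theorem Submodule.exists_mem_orthogonal_norm_eq_one_of_finrank_lt (V W : Submodule 𝕜 E)
    [FiniteDimensional 𝕜 V] [FiniteDimensional 𝕜 W]
    (h : Module.finrank 𝕜 V < Module.finrank 𝕜 W) :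
    ∃ φ ∈ W, φ ∈ Vᗮ ∧ ‖φ‖ = 1 := by
  obtain ⟨ψ, hψ, hψ0⟩ := (Submodule.ne_bot_iff _).1
    (LinearMap.ker_ne_bot_of_finrank_lt
      (f := V.orthogonalProjectionOnto.toLinearMap ∘ₗ W.subtype) h)
  have hψ0 : (ψ : E) ≠ 0 := by simpa using hψ0
  exact ⟨(‖(ψ : E)‖⁻¹ : 𝕜) • ψ, W.smul_mem _ ψ.2,
    Vᗮ.smul_mem _ (Submodule.orthogonalProjectionOnto_eq_zero_iff.1 hψ),
    norm_smul_inv_norm hψ0⟩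

theorem Orthonormal.sum_inner_smul_eq_of_mem_span {ι : Type*} [Fintype ι] {e : ι → E}
    (he : Orthonormal 𝕜 e) {x : E} (hx : x ∈ Submodule.span 𝕜 (Set.range e)) :
    ∑ i, inner 𝕜 (e i) x • e i = x := by
  obtain ⟨a, rfl⟩ := (Submodule.mem_span_range_iff_exists_fun 𝕜).1 hx
  simp only [he.inner_right_fintype]

end InnerProductSpace

section RealInnerProductSpace

variable {E : Type*} [NormedAddCommGroup E] [InnerProductSpace ℝ E]

theorem abs_inner_le_infDist {W : Submodule ℝ E} {e : E} (he : e ∈ Wᗮ) (he1 : ‖e‖ ≤ 1)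
    (x : E) :
    |⟪x, e⟫| ≤ infDist x W := by
  refine (le_infDist ⟨0, W.zero_mem⟩).2 fun w hw => ?_
  calc |⟪x, e⟫| = |⟪x - w, e⟫| := by
        rw [inner_sub_left, Submodule.inner_right_of_mem_orthogonal hw he, sub_zero]
    _ ≤ ‖x - w‖ * ‖e‖ := abs_real_inner_le_norm _ _
    _ ≤ dist x w := by rw [dist_eq_norm]; exact mul_le_of_le_one_right (norm_nonneg _) he1

end RealInnerProductSpace

section Compact

variable {X : Type*} [PseudoMetricSpace X] {K : Set X}

theorem IsCompact.bddAbove_range_infDist (hK : IsCompact K) (S : Set X) :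
    BddAbove (Set.range fun w : K => infDist (w : X) S) := by
  rw [← Set.image_eq_range (fun w => infDist w S) K]
  exact hK.bddAbove_image (continuous_infDist_pt S).continuousOn

theorem IsCompact.infDist_le_iSup_infDist (hK : IsCompact K) (S : Set X) {v : X} (hv : v ∈ K) :
    infDist v S ≤ ⨆ w : K, infDist (w : X) S :=
  le_ciSup (hK.bddAbove_range_infDist S) (⟨v, hv⟩ : K)

end Compact

section GreedySpace

variable {E : Type*} [NormedAddCommGroup E] [InnerProductSpace ℝ E] (u : ℕ → E)

theorem greedySpace_mono : Monotone (greedySpace u) :=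
  fun _ _ h => Submodule.span_mono (Set.image_mono fun _ hi => lt_of_lt_of_le hi h)

instance (n : ℕ) : FiniteDimensional ℝ (greedySpace u n) :=
  FiniteDimensional.span_of_finite ℝ ((Set.finite_Iio n).image u)

theorem greedySpace_eq_span_gramSchmidtNormed (n : ℕ) :
    greedySpace u n = Submodule.span ℝ (gramSchmidtNormed ℝ u '' Set.Iio n) := by
  rw [span_gramSchmidtNormed, span_gramSchmidt_Iio]
  rfl

theorem sub_gramSchmidt_mem_greedySpace (j : ℕ) :
    u j - gramSchmidt ℝ u j ∈ greedySpace u j := by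
  rw [gramSchmidt_def ℝ u j, sub_sub_cancel]
  refine Submodule.sum_mem _ fun i hi => ?_
  have hgi : gramSchmidt ℝ u i ∈ greedySpace u j :=
    Submodule.span_mono (Set.image_mono fun _ hk => lt_of_le_of_lt hk (Finset.mem_Iio.mp hi))
      (gramSchmidt_mem_span ℝ u le_rfl)
  exact (Submodule.span_singleton_le_iff_mem _ _).2 hgi (Submodule.starProjection_apply_mem _ _)

theorem gramSchmidt_mem_orthogonal_greedySpace (j : ℕ) :
    gramSchmidt ℝ u j ∈ (greedySpace u j)ᗮ := by
  have h : greedySpace u j ≤ (ℝ ∙ gramSchmidt ℝ u j)ᗮ := Submodule.span_le.2 <| by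
    rintro _ ⟨i, hi, rfl⟩
    exact Submodule.mem_orthogonal_singleton_iff_inner_right.2
      (gramSchmidt_inv_triangular ℝ u hi)
  exact Submodule.orthogonal_le h
    (Submodule.le_orthogonal_orthogonal _ (Submodule.mem_span_singleton_self _))

theorem gramSchmidtNormed_mem_orthogonal_greedySpace (j : ℕ) :
    gramSchmidtNormed ℝ u j ∈ (greedySpace u j)ᗮ :=
  Submodule.smul_mem _ _ (gramSchmidt_mem_orthogonal_greedySpace u j)

theorem norm_gramSchmidtNormed_le_one (j : ℕ) : ‖gramSchmidtNormed ℝ u j‖ ≤ 1 := by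
  rw [gramSchmidtNormed, norm_smul, norm_inv, RCLike.norm_ofReal, abs_norm]
  exact inv_mul_le_one_of_le₀ le_rfl (norm_nonneg _)

theorem infDist_le_norm_gramSchmidt (j : ℕ) :
    infDist (u j) (greedySpace u j) ≤ ‖gramSchmidt ℝ u j‖ := by
  simpa [dist_eq_norm] using
    infDist_le_dist_of_mem (x := u j) (sub_gramSchmidt_mem_greedySpace u j)

theorem inner_gramSchmidtNormed_self (j : ℕ) :
    ⟪u j, gramSchmidtNormed ℝ u j⟫ = ‖gramSchmidt ℝ u j‖ := by
  have h := Submodule.inner_right_of_mem_orthogonal (sub_gramSchmidt_mem_greedySpace u j)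
    (gramSchmidtNormed_mem_orthogonal_greedySpace u j)
  rw [inner_sub_left, sub_eq_zero] at h
  rw [h, gramSchmidtNormed, real_inner_smul_right, real_inner_self_eq_norm_sq,
    RCLike.ofReal_real_eq_id, id, sq, ← mul_assoc, inv_mul_mul_self]

theorem inner_gramSchmidtNormed_of_lt {i j : ℕ} (h : i < j) :
    ⟪u i, gramSchmidtNormed ℝ u j⟫ = 0 :=
  Submodule.inner_right_of_mem_orthogonal (Submodule.subset_span (Set.mem_image_of_mem u h))
    (gramSchmidtNormed_mem_orthogonal_greedySpace u j)

theorem inner_sum_smul_gramSchmidtNormed (c : ℕ → ℝ) {i m : ℕ} (him : i < m) :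
    ⟪u i, ∑ j ∈ range m, c j • gramSchmidtNormed ℝ u j⟫ =
      ∑ j ∈ range (i + 1), c j * ⟪u i, gramSchmidtNormed ℝ u j⟫ := by
  simp only [inner_sum, real_inner_smul_right]
  refine (sum_subset (range_subset_range.2 him) fun j _ hj => ?_).symm
  rw [inner_gramSchmidtNormed_of_lt u (by simpa using hj), mul_zero]

theorem orthonormal_gramSchmidtNormed_fin {m : ℕ} (h : ∀ j < m, gramSchmidt ℝ u j ≠ 0) :
    Orthonormal ℝ fun j : Fin m => gramSchmidtNormed ℝ u j := by
  have hne (j : Fin m) : gramSchmidtNormed ℝ u j ≠ 0 := by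
    simpa [gramSchmidtNormed] using h j j.2
  exact (gramSchmidtNormed_orthonormal' u).comp
    (fun j : Fin m => (⟨j, hne j⟩ : {i | gramSchmidtNormed ℝ u i ≠ 0}))
    fun i j hij => Fin.ext (congrArg Subtype.val hij)

theorem span_gramSchmidtNormed_fin (m : ℕ) :
    Submodule.span ℝ (Set.range fun j : Fin m => gramSchmidtNormed ℝ u j) =
      greedySpace u m := by
  rw [greedySpace_eq_span_gramSchmidtNormed, ← Fin.range_val, ← Set.range_comp]
  rfl

theorem finrank_greedySpace {m : ℕ} (h : ∀ j < m, gramSchmidt ℝ u j ≠ 0) :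
    Module.finrank ℝ (greedySpace u m) = m := by
  rw [← span_gramSchmidtNormed_fin,
    finrank_span_eq_card (orthonormal_gramSchmidtNormed_fin u h).linearIndependent,
    Fintype.card_fin]

theorem sum_inner_gramSchmidtNormed_smul_of_mem {m : ℕ} (h : ∀ j < m, gramSchmidt ℝ u j ≠ 0)
    {x : E} (hx : x ∈ greedySpace u m) :
    ∑ j ∈ range m, ⟪gramSchmidtNormed ℝ u j, x⟫ • gramSchmidtNormed ℝ u j = x := by
  rw [← Fin.sum_univ_eq_sum_range
    (fun j => ⟪gramSchmidtNormed ℝ u j, x⟫ • gramSchmidtNormed ℝ u j)]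
  exact (orthonormal_gramSchmidtNormed_fin u h).sum_inner_smul_eq_of_mem_span
    ((span_gramSchmidtNormed_fin u m).symm ▸ hx)

theorem greedyErr_nonneg (K : Set E) (n : ℕ) : 0 ≤ greedyErr K u n :=
  Real.iSup_nonneg fun _ => infDist_nonneg

theorem greedyErr_antitone {K : Set E} (hK : IsCompact K) : Antitone (greedyErr K u) :=
  fun m _ h => ciSup_mono (hK.bddAbove_range_infDist _)
    fun _ => infDist_le_infDist_of_subset (greedySpace_mono u h) ⟨0, (greedySpace u m).zero_mem⟩

end GreedySpace

section Greedy

variable {E : Type*} [NormedAddCommGroup E] [InnerProductSpace ℝ E] {K : Set E} {u : ℕ → E}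

theorem IsWeakGreedy.greedyErr_le_norm_gramSchmidt (hwg : IsWeakGreedy K u 1) (j : ℕ) :
    greedyErr K u j ≤ ‖gramSchmidt ℝ u j‖ := by
  simpa using (hwg.2 j).trans (infDist_le_norm_gramSchmidt u j)

theorem IsWeakGreedy.abs_inner_gramSchmidtNormed_le (hK : IsCompact K)
    (hwg : IsWeakGreedy K u 1) (i j : ℕ) :
    |⟪u i, gramSchmidtNormed ℝ u j⟫| ≤ ‖gramSchmidt ℝ u j‖ :=
  (abs_inner_le_infDist (gramSchmidtNormed_mem_orthogonal_greedySpace u j)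
    (norm_gramSchmidtNormed_le_one u j) (u i)).trans <|
      (hK.infDist_le_iSup_infDist _ (hwg.1 i)).trans (hwg.greedyErr_le_norm_gramSchmidt j)

theorem IsWeakGreedy.greedyErr_mul_sqrt_three_le (hK : IsCompact K) (hwg : IsWeakGreedy K u 1)
    (n : ℕ) (V : Submodule ℝ E) [FiniteDimensional ℝ V] (hV : Module.finrank ℝ V ≤ n) :
    greedyErr K u n * √3 ≤ 2 ^ (n + 1) * ⨆ v : K, infDist (v : E) V := by
  set σ := greedyErr K u n
  set δ := ⨆ v : K, infDist (v : E) V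
  set e := gramSchmidtNormed ℝ u
  have hσ_le (j : ℕ) (hj : j ≤ n) : σ ≤ ‖gramSchmidt ℝ u j‖ :=
    (greedyErr_antitone u hK hj).trans (hwg.greedyErr_le_norm_gramSchmidt j)
  rcases (show 0 ≤ σ from greedyErr_nonneg u K n).eq_or_lt with hσ | hσ
  · rw [← hσ, zero_mul]
    exact mul_nonneg (by positivity) (Real.iSup_nonneg fun _ => infDist_nonneg)
  have hg (j : ℕ) (hj : j < n + 1) : gramSchmidt ℝ u j ≠ 0 :=
    norm_pos_iff.1 (hσ.trans_le (hσ_le j (Nat.lt_succ_iff.1 hj)))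
  obtain ⟨φ, hφW, hφV, hφ1⟩ :=
    V.exists_mem_orthogonal_norm_eq_one_of_finrank_lt (greedySpace u (n + 1)) <| by
      rw [finrank_greedySpace u hg]
      omega
  set c : ℕ → ℝ := fun j => ⟪e j, φ⟫
  have hexp : ∑ j ∈ range (n + 1), c j • e j = φ :=
    sum_inner_gramSchmidtNormed_smul_of_mem u hg hφW
  have hparseval : ∑ j ∈ range (n + 1), c j ^ 2 = 1 :=
    calc ∑ j ∈ range (n + 1), c j ^ 2 = ⟪φ, ∑ j ∈ range (n + 1), c j • e j⟫ := by
          simp only [inner_sum, real_inner_smul_right, real_inner_comm φ, c, sq]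
      _ = 1 := by rw [hexp, real_inner_self_eq_norm_sq, hφ1, one_pow]
  have hrow (i : ℕ) (hi : i ≤ n) : |∑ j ∈ range (i + 1), c j * ⟪u i, e j⟫| ≤ δ := by
    rw [← inner_sum_smul_gramSchmidtNormed u c (Nat.lt_succ_of_le hi), hexp]
    exact (abs_inner_le_infDist hφV hφ1.le _).trans (hK.infDist_le_iSup_infDist _ (hwg.1 i))
  have hcoef := mul_abs_le_two_pow_mul_of_lowerTriangular (M := fun i j => ⟪u i, e j⟫)
    (fun i j _ => by simpa [e, inner_gramSchmidtNormed_self] using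
      hwg.abs_inner_gramSchmidtNormed_le hK i j) hrow
  refine mul_sqrt_three_le_of_sum_sq_eq_one (greedyErr_nonneg u K n) hparseval fun j hj => ?_
  calc σ * |c j| ≤ ⟪u j, e j⟫ * |c j| := by
        rw [inner_gramSchmidtNormed_self]
        exact mul_le_mul_of_nonneg_right (hσ_le j hj) (abs_nonneg _)
    _ ≤ 2 ^ j * δ := hcoef j hj

end Greedy

/-- for the (exact) greedy algorithm (`γ = 1`) one has the sharp
direct comparison `σ_n(𝒦)_H ≤ (2^{n+1}/√3)·d_n(𝒦)_H` for all `n ≥ 1`. -/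
theorem greedy_direct_comparison
    (K : Set H) (hK : IsCompact K) (u : ℕ → H)
    (hwg : IsWeakGreedy K u 1) :
    ∀ n : ℕ, 1 ≤ n →
      greedyErr K u n ≤ (2 ^ (n + 1) / Real.sqrt 3) * kolWidth K n := by
  intro n _
  have : Nonempty {V : Submodule ℝ H // FiniteDimensional ℝ V ∧ Module.finrank ℝ V ≤ n} :=
    ⟨⟨⊥, inferInstance, by simp⟩⟩
  rw [kolWidth, Real.mul_iInf_of_nonneg (by positivity)]
  refine le_ciInf fun ⟨V, hfin, hV⟩ => ?_
  rw [div_mul_eq_mul_div, le_div_iff₀ (by positivity)]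
  exact hwg.greedyErr_mul_sqrt_three_le hK n V hV
end

section
/- Let W ⊂ U be a finite-dimensional subspace and V(W) := R_V B(W) ⊂ V the ideal test space. Then: (a) u_h ∈ W satisfies the Petrov–Galerkin equations b(u_h, v) = ⟨f, v⟩ for all v ∈ V(W) if and only if u_h is the best approximation to u from W in the ‖·‖_{Û}-norm (equivalently, the Û-orthogonal projection of u onto W); and (b) inf_{w∈W, w≠0} sup_{v∈V(W), v≠0} b(w,v)/(‖w‖_{Û} ‖v‖_V) = 1. -/
open Metric InnerProductSpace RealInnerProductSpace

set_option maxHeartbeats 1000000 in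
/-- with the renormed trial norm `‖w‖_Û := ‖Bw‖_{V'}` and the ideal
test space `V(W) := R_V B(W)`:
(a) `u_h ∈ W` solves the Petrov–Galerkin equations `b(u_h,v) = ⟨f,v⟩` for all
`v ∈ V(W)` iff `u_h` is a best approximation to `u` from `W` in `‖·‖_Û`; and
(b) the inf-sup constant of the pair `(W, V(W))` equals `1`:
`inf_{w∈W, w≠0} sup_{v∈V(W), v≠0} b(w,v)/(‖w‖_Û ‖v‖_V) = 1`. -/
theorem ideal_test_space_petrovGalerkin
    {U V : Type*} [NormedAddCommGroup U] [InnerProductSpace ℝ U] [CompleteSpace U]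
    [NormedAddCommGroup V] [InnerProductSpace ℝ V] [CompleteSpace V]
    (B : U ≃L[ℝ] (V →L[ℝ] ℝ)) (f : V →L[ℝ] ℝ) (u : U) (hu : B u = f)
    (W : Submodule ℝ U) [FiniteDimensional ℝ W] (hW : W ≠ ⊥)
    (uh : U) (huh : uh ∈ W) :
    ((∀ w ∈ W, (B uh) ((toDual ℝ V).symm (B w)) = f ((toDual ℝ V).symm (B w))) ↔
        (∀ w ∈ W, ‖B (u - uh)‖ ≤ ‖B (u - w)‖)) ∧
      (⨅ w : {w : U // w ∈ W ∧ w ≠ 0},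
          ⨆ v : {v : V // (∃ x ∈ W, (toDual ℝ V).symm (B x) = v) ∧ v ≠ 0},
            (B w.1) v.1 / (‖B w.1‖ * ‖v.1‖)) = 1 := by
  classical
  set T : U → V := fun x => (toDual ℝ V).symm (B x) with hTdef
  have hBT : ∀ (x : U) (v : V), (B x) v = ⟪T x, v⟫_ℝ := by
    intro x v
    rw [hTdef]
    rw [← InnerProductSpace.toDual_apply_apply, LinearIsometryEquiv.apply_symm_apply]
  have hTnorm : ∀ x : U, ‖B x‖ = ‖T x‖ := by
    intro x; rw [hTdef]; simp
  have hTsub : ∀ x y : U, T (x - y) = T x - T y := by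
    intro x y; simp [hTdef]
  have hTne : ∀ x : U, x ≠ 0 → T x ≠ 0 := by
    intro x hx h0
    apply hx
    have : B x = 0 := by
      have := congrArg (toDual ℝ V) h0
      simpa [hTdef] using this
    exact B.injective (by simpa using this)
  constructor
  · -- part (a)
    constructor
    · -- PG → best approximation
      intro hpg w hw
      have horth : ∀ z ∈ W, ⟪T (u - uh), T z⟫_ℝ = 0 := by
        intro z hz
        have h1 := hpg z hz
        have : (B (u - uh)) (T z) = 0 := by
          have : (B u) (T z) - (B uh) (T z) = 0 := by
            rw [hu, h1]; ring
          simpa [map_sub] using this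
        rw [hBT] at this; exact this
      rw [hTnorm, hTnorm]
      have key : ⟪T (u - uh), T (uh - w)⟫_ℝ = 0 := horth _ (W.sub_mem huh hw)
      have hdecomp : T (u - w) = T (u - uh) + T (uh - w) := by
        rw [hTsub, hTsub, hTsub]; abel
      have hsq : ‖T (u - w)‖ ^ 2 = ‖T (u - uh)‖ ^ 2 + ‖T (uh - w)‖ ^ 2 := by
        rw [hdecomp, norm_add_sq_real, key]; ring
      nlinarith [norm_nonneg (T (u - w)), norm_nonneg (T (u - uh)),
        norm_nonneg (T (uh - w)), sq_nonneg (‖T (uh - w)‖)]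
    · -- best approximation → PG
      intro hbest w hw
      have horth : ⟪T (u - uh), T w⟫_ℝ = 0 := by
        by_cases hTw : T w = 0
        · rw [hTw, inner_zero_right]
        · set c : ℝ := ⟪T (u - uh), T w⟫_ℝ with hc
          set t : ℝ := c / ‖T w‖ ^ 2 with ht
          have hWmem : uh + t • w ∈ W := W.add_mem huh (W.smul_mem _ hw)
          have hle := hbest _ hWmem
          rw [hTnorm, hTnorm] at hle
          have hTexp : T (u - (uh + t • w)) = T (u - uh) - t • T w := by
            have h1 : u - (uh + t • w) = (u - uh) - t • w := by abel
            rw [h1, hTsub]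
            congr 1
            simp [hTdef, map_smul]
          have hnormpos : (0:ℝ) < ‖T w‖ ^ 2 := pow_pos (norm_pos_iff.mpr hTw) 2
          have hsq : ‖T (u - (uh + t • w))‖ ^ 2
              = ‖T (u - uh)‖ ^ 2 - 2 * t * c + t ^ 2 * ‖T w‖ ^ 2 := by
            rw [hTexp, norm_sub_sq_real, real_inner_smul_right, norm_smul, mul_pow,
              Real.norm_eq_abs, sq_abs, ← hc]
            ring
          have hle2 : ‖T (u - uh)‖ ^ 2 ≤ ‖T (u - (uh + t • w))‖ ^ 2 := by
            nlinarith [norm_nonneg (T (u - uh)), norm_nonneg (T (u - (uh + t • w)))]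
          have hct : c = t * ‖T w‖ ^ 2 := by
            rw [ht]; field_simp
          have h4 : t ^ 2 * ‖T w‖ ^ 2 = t * c := by rw [hct]; ring
          have h5 : t * c ≤ 0 := by nlinarith
          have hc0 : c ^ 2 ≤ 0 := by nlinarith
          have hcc : c ^ 2 = 0 := le_antisymm hc0 (sq_nonneg c)
          exact pow_eq_zero_iff two_ne_zero |>.mp hcc
      have : (B (u - uh)) (T w) = 0 := by rw [hBT]; exact horth
      have h2 : (B u) (T w) - (B uh) (T w) = 0 := by simpa [map_sub] using this
      rw [← hu]; linarith
  · -- part (b)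
    obtain ⟨w0, hw0W, hw0⟩ := Submodule.exists_mem_ne_zero_of_ne_bot hW
    haveI hWne : Nonempty {w : U // w ∈ W ∧ w ≠ 0} := ⟨⟨w0, hw0W, hw0⟩⟩
    have hsup : ∀ w : {w : U // w ∈ W ∧ w ≠ 0},
        (⨆ v : {v : V // (∃ x ∈ W, (toDual ℝ V).symm (B x) = v) ∧ v ≠ 0},
          (B w.1) v.1 / (‖B w.1‖ * ‖v.1‖)) = 1 := by
      rintro ⟨w, hwW, hw⟩
      have hTw : T w ≠ 0 := hTne w hw
      haveI : Nonempty {v : V // (∃ x ∈ W, (toDual ℝ V).symm (B x) = v) ∧ v ≠ 0} :=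
        ⟨⟨T w, ⟨w, hwW, rfl⟩, hTw⟩⟩
      have hbound : ∀ v : {v : V // (∃ x ∈ W, (toDual ℝ V).symm (B x) = v) ∧ v ≠ 0},
          (B w) v.1 / (‖B w‖ * ‖v.1‖) ≤ 1 := by
        rintro ⟨v, _, hv⟩
        have hpos : (0:ℝ) < ‖B w‖ * ‖v‖ := by
          apply mul_pos
          · rw [hTnorm]; exact norm_pos_iff.mpr hTw
          · exact norm_pos_iff.mpr hv
        rw [div_le_one hpos, hBT, hTnorm]
        exact real_inner_le_norm _ _
      have hbdd : BddAbove (Set.range fun v : {v : V // (∃ x ∈ W, (toDual ℝ V).symm (B x) = v) ∧ v ≠ 0} =>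
          (B w) v.1 / (‖B w‖ * ‖v.1‖)) := by
        refine ⟨1, ?_⟩
        rintro y ⟨v, rfl⟩
        exact hbound v
      apply le_antisymm
      · exact ciSup_le hbound
      · have hval : (B w) (T w) / (‖B w‖ * ‖T w‖) = 1 := by
          rw [hBT, hTnorm, real_inner_self_eq_norm_mul_norm]
          have : ‖T w‖ ≠ 0 := norm_ne_zero_iff.mpr hTw
          field_simp
        calc (1:ℝ) = (B w) (T w) / (‖B w‖ * ‖T w‖) := hval.symm
          _ ≤ _ := le_ciSup hbdd ⟨T w, ⟨w, hwW, rfl⟩, hTw⟩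
    rw [iInf_congr hsup]
    exact ciInf_const
end

section
/- Let W ⊂ U be a finite-dimensional subspace. Then the pair (r, u_W) ∈ V × W solves the saddle point problem (r, v)_V + b(u_W, v) = ⟨f, v⟩ for all v ∈ V and b(w, r) = 0 for all w ∈ W, if and only if u_W solves the ideal Petrov–Galerkin problem b(u_W, v) = ⟨f, v⟩ for all v ∈ V(W) := R_V B(W) (equivalently, u_W minimizes ‖f − Bw‖_{V'} over w ∈ W); moreover in that case r = R_V(f − B u_W). -/
open Metric InnerProductSpace RealInnerProductSpace

lemma aux_inner_zero {V : Type*} [NormedAddCommGroup V] [InnerProductSpace ℝ V]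
    (x y : V) (h : ∀ t : ℝ, ‖x‖ ≤ ‖x - t • y‖) : ⟪x, y⟫_ℝ = 0 := by
  by_cases hy : y = 0
  · simp [hy]
  · have hy0 : 0 < ‖y‖ := norm_pos_iff.mpr hy
    have hy2 : 0 < ‖y‖ ^ 2 := by positivity
    set c := ⟪x, y⟫_ℝ with hc
    set t := c / ‖y‖ ^ 2 with ht
    have ht2 : t * ‖y‖ ^ 2 = c := div_mul_cancel₀ _ (ne_of_gt hy2)
    have h1 := h t
    have h2 : ‖x - t • y‖ ^ 2 = ‖x‖ ^ 2 - 2 * t * c + t ^ 2 * ‖y‖ ^ 2 := by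
      rw [norm_sub_sq_real, real_inner_smul_right, norm_smul]
      simp [mul_pow]
      ring
    have h3 : ‖x‖ ^ 2 ≤ ‖x - t • y‖ ^ 2 := by
      have := norm_nonneg x
      nlinarith
    have h4 : t ^ 2 * ‖y‖ ^ 2 = t * c := by rw [← ht2]; ring
    have h5 : t * c ≤ 0 := by nlinarith
    have h6 : c ^ 2 = (t * c) * ‖y‖ ^ 2 := by rw [← ht2]; ring
    have h7 : c ^ 2 = 0 := le_antisymm (by nlinarith) (sq_nonneg c)
    exact pow_eq_zero_iff two_ne_zero |>.mp h7


open Metric InnerProductSpace RealInnerProductSpace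

/-- for a finite-dimensional `W ⊂ U`, the pair `(r, u_W) ∈ V × W`
solves the saddle point problem
`(r,v)_V + b(u_W,v) = ⟨f,v⟩ ∀ v ∈ V`, `b(w,r) = 0 ∀ w ∈ W`
iff `u_W` solves the ideal Petrov–Galerkin problem with test space `V(W) = R_V B(W)`
(equivalently, `u_W` minimizes the residual `‖f − Bw‖_{V'}` over `w ∈ W`); moreover in
that case `r = R_V(f − B u_W)`. -/
theorem saddle_point_equiv_ideal_petrovGalerkin
    {U V : Type*} [NormedAddCommGroup U] [InnerProductSpace ℝ U] [CompleteSpace U]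
    [NormedAddCommGroup V] [InnerProductSpace ℝ V] [CompleteSpace V]
    (B : U ≃L[ℝ] (V →L[ℝ] ℝ)) (f : V →L[ℝ] ℝ)
    (W : Submodule ℝ U) [FiniteDimensional ℝ W]
    (uW : U) (huW : uW ∈ W) :
    ((∃ r : V, (∀ v : V, ⟪r, v⟫_ℝ + (B uW) v = f v) ∧ ∀ w ∈ W, (B w) r = 0) ↔
        (∀ w ∈ W, (B uW) ((toDual ℝ V).symm (B w)) = f ((toDual ℝ V).symm (B w)))) ∧
      ((∀ w ∈ W, (B uW) ((toDual ℝ V).symm (B w)) = f ((toDual ℝ V).symm (B w))) ↔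
        (∀ w ∈ W, ‖f - B uW‖ ≤ ‖f - B w‖)) ∧
      (∀ r : V, ((∀ v : V, ⟪r, v⟫_ℝ + (B uW) v = f v) ∧ ∀ w ∈ W, (B w) r = 0) →
        r = (toDual ℝ V).symm (f - B uW)) := by

  have key : ∀ (ℓ : V →L[ℝ] ℝ) (v : V), ⟪(toDual ℝ V).symm ℓ, v⟫_ℝ = ℓ v :=
    fun ℓ v => InnerProductSpace.toDual_symm_apply
  set σ := (toDual ℝ V).symm with hσ
  set r₀ := σ (f - B uW) with hr₀
  have hr₀v : ∀ v : V, ⟪r₀, v⟫_ℝ = f v - B uW v := by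
    intro v; rw [hr₀]; rw [key]; simp
  have part3 : ∀ r : V, ((∀ v : V, ⟪r, v⟫_ℝ + (B uW) v = f v) ∧ ∀ w ∈ W, (B w) r = 0) →
      r = r₀ := by
    rintro r ⟨h1, -⟩
    refine ext_inner_right ℝ fun v => ?_
    rw [hr₀v]
    have := h1 v; linarith
  have ortho_iff : ∀ w : U, ((B uW) (σ (B w)) = f (σ (B w))) ↔ ⟪r₀, σ (B w)⟫_ℝ = 0 := by
    intro w; rw [hr₀v]; constructor <;> intro h <;> linarith
  refine ⟨⟨?_, ?_⟩, ⟨?_, ?_⟩, part3⟩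
  · rintro ⟨r, h1, h2⟩ w hw
    have hr : r = r₀ := part3 r ⟨h1, h2⟩
    have h1' := h1 (σ (B w))
    have hz : ⟪r, σ (B w)⟫_ℝ = 0 := by
      rw [real_inner_comm, key]; exact h2 w hw
    linarith
  · intro h
    refine ⟨r₀, fun v => by have := hr₀v v; linarith, fun w hw => ?_⟩
    have := (ortho_iff w).mp (h w hw)
    rw [real_inner_comm] at this
    rw [← key (B w) r₀]
    exact this
  · -- orthogonality → minimization
    intro h w hw
    have huw : uW - w ∈ W := W.sub_mem huW hw
    set d := σ (B (uW - w)) with hd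
    have hsplit : σ (f - B w) = r₀ + d := by
      rw [hr₀, hd]
      simp only [map_sub, hσ]
      abel
    have hperp : ⟪r₀, d⟫_ℝ = 0 := (ortho_iff (uW - w)).mp (h (uW - w) huw)
    have hn1 : ‖f - B uW‖ = ‖r₀‖ := (σ.norm_map _).symm
    have hn2 : ‖f - B w‖ = ‖r₀ + d‖ := by rw [← hsplit]; exact (σ.norm_map _).symm
    rw [hn1, hn2]
    have hsq : ‖r₀ + d‖ ^ 2 = ‖r₀‖ ^ 2 + ‖d‖ ^ 2 := by
      rw [norm_add_sq_real, hperp]; ring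
    nlinarith [norm_nonneg r₀, norm_nonneg (r₀ + d), sq_nonneg ‖d‖]
  · -- minimization → orthogonality
    intro h w hw
    rw [ortho_iff]
    refine aux_inner_zero r₀ (σ (B w)) fun t => ?_
    have hmem : uW + t • w ∈ W := W.add_mem huW (W.smul_mem t hw)
    have := h (uW + t • w) hmem
    have hn1 : ‖f - B uW‖ = ‖r₀‖ := (σ.norm_map _).symm
    have hn2 : ‖f - B (uW + t • w)‖ = ‖r₀ - t • σ (B w)‖ := by
      have : σ (f - B (uW + t • w)) = r₀ - t • σ (B w) := by
        rw [hr₀]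
        simp only [map_add, map_smul, map_sub, hσ]
        abel
      rw [← this]; exact (σ.norm_map _).symm
    rw [hn1, hn2] at this
    exact this
end

section
/- Let W ⊂ U and Z ⊂ V be finite-dimensional subspaces. A pair (u_{W,Z}, r_{W,Z}) ∈ W × Z solves the discrete saddle point problem (r_{W,Z}, v)_V + b(u_{W,Z}, v) = ⟨f, v⟩ for all v ∈ Z and b(w, r_{W,Z}) = 0 for all w ∈ W, if and only if u_{W,Z} solves the Petrov–Galerkin problem b(u_{W,Z}, v) = ⟨f, v⟩ for all v ∈ P_{V,Z}(R_V B(W)), where P_{V,Z} is the V-orthogonal projection onto Z. -/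
open Metric InnerProductSpace RealInnerProductSpace

/-! The residual `r` of the saddle point problem is the Riesz representative in `Z` of
`f - B u`, namely `P_Z R_V (f - B u)`. Since `P_Z` is self-adjoint,
`(B w)(P_Z R_V ℓ) = ℓ(P_Z R_V (B w))`, so the constraint `b(w, r) = 0` on `W` is exactly
the Petrov–Galerkin equation tested with `P_Z R_V (B w)`. -/

namespace Submodule

variable {V : Type*} [NormedAddCommGroup V] [InnerProductSpace ℝ V] [CompleteSpace V]
  (Z : Submodule ℝ V) [Z.HasOrthogonalProjection]

theorem inner_starProjection_toDual_symm_of_mem (ℓ : StrongDual ℝ V) {v : V} (hv : v ∈ Z) :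
    ⟪Z.starProjection ((toDual ℝ V).symm ℓ), v⟫_ℝ = ℓ v := by
  rw [Z.inner_starProjection_left_eq_right, Z.starProjection_eq_self_iff.mpr hv,
    toDual_symm_apply]

theorem apply_starProjection_toDual_symm_comm (ℓ m : StrongDual ℝ V) :
    ℓ (Z.starProjection ((toDual ℝ V).symm m)) = m (Z.starProjection ((toDual ℝ V).symm ℓ)) := by
  rw [← toDual_symm_apply, ← Z.inner_starProjection_left_eq_right, real_inner_comm,
    toDual_symm_apply]

end Submodule

theorem discrete_saddle_point_equiv_petrovGalerkin_general
    {U V : Type*} [NormedAddCommGroup U] [InnerProductSpace ℝ U]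
    [NormedAddCommGroup V] [InnerProductSpace ℝ V] [CompleteSpace V]
    (B : U ≃L[ℝ] (V →L[ℝ] ℝ)) (f : V →L[ℝ] ℝ)
    (W : Submodule ℝ U)
    (Z : Submodule ℝ V) [FiniteDimensional ℝ Z]
    (uWZ : U) :
    (∃ rWZ ∈ Z, (∀ v ∈ Z, ⟪rWZ, v⟫_ℝ + (B uWZ) v = f v) ∧ ∀ w ∈ W, (B w) rWZ = 0) ↔
      (∀ w ∈ W,
        (B uWZ) ((Submodule.orthogonalProjection Z ((toDual ℝ V).symm (B w)) : Z) : V) =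
          f ((Submodule.orthogonalProjection Z ((toDual ℝ V).symm (B w)) : Z) : V)) := by
  simp only [Submodule.coe_orthogonalProjectionOnto_apply]
  constructor
  · rintro ⟨r, hrZ, hr, horth⟩ w hw
    have h := hr _ (Z.starProjection_apply_mem ((toDual ℝ V).symm (B w)))
    rwa [real_inner_comm, Z.inner_starProjection_toDual_symm_of_mem (B w) hrZ, horth w hw,
      zero_add] at h
  · intro h
    refine ⟨Z.starProjection ((toDual ℝ V).symm (f - B uWZ)), Z.starProjection_apply_mem _,
      fun v hv => ?_, fun w hw => ?_⟩
    · rw [Z.inner_starProjection_toDual_symm_of_mem _ hv, sub_apply,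
        sub_add_cancel]
    · rw [Z.apply_starProjection_toDual_symm_comm, sub_apply, h w hw,
        sub_self]

/-- Theorem `thm:saddle` (i): for finite-dimensional `W ⊂ U`,
`Z ⊂ V`, the pair `(u_{W,Z}, r_{W,Z}) ∈ W × Z` solves the discrete saddle point problem
`(r,v)_V + b(u_{W,Z},v) = ⟨f,v⟩ ∀ v ∈ Z`, `b(w,r) = 0 ∀ w ∈ W`,
iff `u_{W,Z}` solves the Petrov–Galerkin problem with test space
`P_{V,Z}(R_V B(W))`, `P_{V,Z}` being the `V`-orthogonal projection onto `Z`. -/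
theorem discrete_saddle_point_equiv_petrovGalerkin
    {U V : Type*} [NormedAddCommGroup U] [InnerProductSpace ℝ U] [CompleteSpace U]
    [NormedAddCommGroup V] [InnerProductSpace ℝ V] [CompleteSpace V]
    (B : U ≃L[ℝ] (V →L[ℝ] ℝ)) (f : V →L[ℝ] ℝ)
    (W : Submodule ℝ U) [FiniteDimensional ℝ W]
    (Z : Submodule ℝ V) [FiniteDimensional ℝ Z]
    (uWZ : U) (huWZ : uWZ ∈ W) :
    (∃ rWZ ∈ Z, (∀ v ∈ Z, ⟪rWZ, v⟫_ℝ + (B uWZ) v = f v) ∧ ∀ w ∈ W, (B w) rWZ = 0) ↔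
      (∀ w ∈ W,
        (B uWZ) ((Submodule.orthogonalProjection Z ((toDual ℝ V).symm (B w)) : Z) : V) =
          f ((Submodule.orthogonalProjection Z ((toDual ℝ V).symm (B w)) : Z) : V)) :=
  discrete_saddle_point_equiv_petrovGalerkin_general B f W Z uWZ
end

section
/- Let W ⊂ U and Z ⊂ V be finite-dimensional subspaces and δ ∈ (0,1). If Z is δ-proximal for W, then the discrete saddle point problem (r_{W,Z}, v)_V + b(u_{W,Z}, v) = ⟨f, v⟩ for all v ∈ Z, b(w, r_{W,Z}) = 0 for all w ∈ W, has a unique solution (u_{W,Z}, r_{W,Z}) ∈ W × Z, and it satisfies ‖u − u_{W,Z}‖_{Û} ≤ (1−δ)^{−1} inf_{w∈W} ‖u − w‖_{Û} and ‖u − u_{W,Z}‖_{Û} + ‖r_{W,Z}‖_V ≤ 2(1−δ)^{−1} inf_{w∈W} ‖u − w‖_{Û}. -/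
open Metric InnerProductSpace RealInnerProductSpace

/-!
Put `T := R_V B`, so that `b(w, v) = ⟪T w, v⟫` and `‖w‖_Û = ‖T w‖`, and let `P := P_{V,Z}`.
The first saddle equation says `r = P T (u - u_{W,Z})`; the second then says that
`P T u_{W,Z}` is the orthogonal projection of `P T u` onto `P T W`. Proximality gives
`(1 - δ) ‖T w‖ ≤ ‖P T w‖` on `W`, so `P T` is injective on `W`: this yields existence and
uniqueness. For `w ∈ W`, `r` is orthogonal to `P T (w - u_{W,Z})`, and Pythagoras bounds both
`‖r‖` and `‖P T (w - u_{W,Z})‖` by `‖u - w‖_Û`. Since also `T (u - u_{W,Z}) ⊥ P T (w - u_{W,Z})`,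
`‖u - u_{W,Z}‖_Û ≤ ‖u - w‖_Û + δ ‖w - u_{W,Z}‖_Û`, and coercivity turns this into
`(1 - δ) ‖u - u_{W,Z}‖_Û ≤ ‖u - w‖_Û`.
-/

theorem norm_le_norm_sub_of_inner_eq_zero {V : Type*} [NormedAddCommGroup V]
    [InnerProductSpace ℝ V] {x y : V} (h : ⟪x, y⟫_ℝ = 0) : ‖x‖ ≤ ‖x - y‖ := by
  rw [mul_self_le_mul_self_iff (norm_nonneg _) (norm_nonneg _),
    norm_sub_sq_eq_norm_sq_add_norm_sq_real h]
  exact le_add_of_nonneg_right (mul_self_nonneg _)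

namespace Submodule

variable {𝕜 V : Type*} [RCLike 𝕜] [NormedAddCommGroup V] [InnerProductSpace 𝕜 V]
  (K : Submodule 𝕜 V) [K.HasOrthogonalProjection]

theorem inner_starProjection_left_of_mem (x : V) {z : V} (hz : z ∈ K) :
    inner 𝕜 (K.starProjection x) z = inner 𝕜 x z := by
  rw [← sub_eq_zero, ← inner_sub_left, ← neg_eq_zero, ← inner_neg_left, neg_sub]
  exact K.starProjection_inner_eq_zero x z hz

theorem eq_starProjection_iff {x r : V} (hr : r ∈ K) :
    r = K.starProjection x ↔ ∀ v ∈ K, inner 𝕜 r v = inner 𝕜 x v := by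
  refine ⟨fun h v hv => h ▸ K.inner_starProjection_left_of_mem x hv, fun h => ?_⟩
  exact (K.eq_starProjection_of_mem_of_inner_eq_zero hr fun v hv => by
    rw [inner_sub_left, h v hv, sub_self]).symm

theorem inner_starProjection_starProjection (x y : V) :
    inner 𝕜 (K.starProjection x) (K.starProjection y) = inner 𝕜 x (K.starProjection y) :=
  K.inner_starProjection_left_of_mem x (K.starProjection_apply_mem y)

end Submodule

section Saddle

variable {U V : Type*} [AddCommGroup U] [Module ℝ U] [NormedAddCommGroup V]
  [InnerProductSpace ℝ V] (T : U →ₗ[ℝ] V) (W : Submodule ℝ U) (Z : Submodule ℝ V)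
  [Z.HasOrthogonalProjection]

def IsProximal (δ : ℝ) : Prop :=
  ∀ w ∈ W, ‖T w - Z.starProjection (T w)‖ ≤ δ * ‖T w‖

def IsSaddleSolution (x : V) (w₀ : U) (r : V) : Prop :=
  (∀ v ∈ Z, ⟪r, v⟫_ℝ + ⟪T w₀, v⟫_ℝ = ⟪x, v⟫_ℝ) ∧ ∀ w ∈ W, ⟪T w, r⟫_ℝ = 0

/-- The second saddle equation after eliminating `r` through the first one. -/
def IsGalerkinSolution (u w₀ : U) : Prop :=
  ∀ w ∈ W, ⟪T w, Z.starProjection (T (u - w₀))⟫_ℝ = 0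

variable {T W Z}

theorem IsProximal.mul_norm_le_norm_starProjection {δ : ℝ} (h : IsProximal T W Z δ) {w : U}
    (hw : w ∈ W) : (1 - δ) * ‖T w‖ ≤ ‖Z.starProjection (T w)‖ := by
  linarith [h w hw, norm_sub_norm_le (T w) (Z.starProjection (T w))]

theorem IsProximal.injOn {δ : ℝ} (h : IsProximal T W Z δ) (hδ : δ < 1)
    (hT : Function.Injective T) : Set.InjOn (Z.starProjection.toLinearMap ∘ₗ T) W := by
  intro w₁ hw₁ w₂ hw₂ heq
  have hP : Z.starProjection (T (w₁ - w₂)) = 0 := by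
    simpa [sub_eq_zero] using heq
  have hcoer := h.mul_norm_le_norm_starProjection (W.sub_mem hw₁ hw₂)
  rw [hP, norm_zero] at hcoer
  have hT0 : T (w₁ - w₂) = 0 := norm_le_zero_iff.1 <|
    nonpos_of_mul_nonpos_right hcoer (sub_pos.2 hδ)
  exact sub_eq_zero.1 (hT (hT0.trans (map_zero T).symm))

theorem isSaddleSolution_iff {u w₀ : U} {r : V} (hr : r ∈ Z) :
    IsSaddleSolution T W Z (T u) w₀ r ↔
      r = Z.starProjection (T (u - w₀)) ∧ IsGalerkinSolution T W Z u w₀ := by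
  have hfirst : (∀ v ∈ Z, ⟪r, v⟫_ℝ + ⟪T w₀, v⟫_ℝ = ⟪T u, v⟫_ℝ) ↔
      r = Z.starProjection (T (u - w₀)) := by
    rw [Z.eq_starProjection_iff hr]
    simp only [map_sub, inner_sub_left, eq_sub_iff_add_eq]
  rw [IsSaddleSolution, hfirst]
  constructor <;> rintro ⟨rfl, h⟩ <;> exact ⟨rfl, h⟩

theorem isGalerkinSolution_iff [FiniteDimensional ℝ W] {u w₀ : U} (hw₀ : w₀ ∈ W) :
    IsGalerkinSolution T W Z u w₀ ↔
      Z.starProjection (T w₀) =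
        (W.map (Z.starProjection.toLinearMap ∘ₗ T)).starProjection (Z.starProjection (T u)) := by
  let S : U →ₗ[ℝ] V := Z.starProjection.toLinearMap ∘ₗ T
  have hS : ∀ w, ⟪S u - S w₀, S w⟫_ℝ = ⟪T w, Z.starProjection (T (u - w₀))⟫_ℝ := fun w => by
    simp only [S, LinearMap.comp_apply, ContinuousLinearMap.coe_coe]
    rw [← map_sub, ← map_sub, real_inner_comm, Z.inner_starProjection_starProjection]
  constructor
  · intro h
    refine (Submodule.eq_starProjection_of_mem_of_inner_eq_zero (W.mem_map_of_mem (f := S) hw₀)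
      ?_).symm
    rintro _ ⟨w, hw, rfl⟩
    exact (hS w).trans (h w hw)
  · intro h w hw
    rw [← hS]
    exact h ▸ Submodule.starProjection_inner_eq_zero _ _ (W.mem_map_of_mem hw)

theorem exists_isGalerkinSolution [FiniteDimensional ℝ W] (u : U) :
    ∃ w₀ ∈ W, IsGalerkinSolution T W Z u w₀ := by
  obtain ⟨w₀, hw₀, h⟩ := (W.map (Z.starProjection.toLinearMap ∘ₗ T)).starProjection_apply_mem
    (Z.starProjection (T u))
  exact ⟨w₀, hw₀, (isGalerkinSolution_iff hw₀).2 h⟩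

theorem IsProximal.isGalerkinSolution_unique [FiniteDimensional ℝ W] {δ : ℝ}
    (h : IsProximal T W Z δ) (hδ : δ < 1) (hT : Function.Injective T) {u w₀ w₁ : U}
    (hw₀ : w₀ ∈ W) (hw₁ : w₁ ∈ W) (h₀ : IsGalerkinSolution T W Z u w₀)
    (h₁ : IsGalerkinSolution T W Z u w₁) : w₀ = w₁ :=
  h.injOn hδ hT hw₀ hw₁ <|
    ((isGalerkinSolution_iff hw₀).1 h₀).trans ((isGalerkinSolution_iff hw₁).1 h₁).symm

namespace IsGalerkinSolution

variable {u w₀ : U} (hgal : IsGalerkinSolution T W Z u w₀) (hw₀ : w₀ ∈ W)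
include hgal hw₀

theorem inner_starProjection_eq_zero {w : U} (hw : w ∈ W) :
    ⟪Z.starProjection (T (u - w₀)), Z.starProjection (T (w - w₀))⟫_ℝ = 0 := by
  rw [real_inner_comm, Z.inner_starProjection_starProjection]
  exact hgal _ (W.sub_mem hw hw₀)

theorem norm_starProjection_le {w : U} (hw : w ∈ W) :
    ‖Z.starProjection (T (u - w₀))‖ ≤ ‖T (u - w)‖ :=
  calc ‖Z.starProjection (T (u - w₀))‖
      ≤ ‖Z.starProjection (T (u - w₀)) - Z.starProjection (T (w - w₀))‖ :=
        norm_le_norm_sub_of_inner_eq_zero (hgal.inner_starProjection_eq_zero hw₀ hw)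
    _ = ‖Z.starProjection (T (u - w))‖ := by rw [← map_sub, ← map_sub, sub_sub_sub_cancel_right]
    _ ≤ ‖T (u - w)‖ := Z.norm_starProjection_apply_le _

theorem norm_starProjection_sub_le {w : U} (hw : w ∈ W) :
    ‖Z.starProjection (T (w - w₀))‖ ≤ ‖T (u - w)‖ :=
  calc ‖Z.starProjection (T (w - w₀))‖
      ≤ ‖Z.starProjection (T (w - w₀)) - Z.starProjection (T (u - w₀))‖ :=
        norm_le_norm_sub_of_inner_eq_zero <| by
          rw [real_inner_comm]; exact hgal.inner_starProjection_eq_zero hw₀ hw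
    _ = ‖Z.starProjection (T (w - u))‖ := by rw [← map_sub, ← map_sub, sub_sub_sub_cancel_right]
    _ ≤ ‖T (w - u)‖ := Z.norm_starProjection_apply_le _
    _ = ‖T (u - w)‖ := by rw [← norm_neg, ← map_neg, neg_sub]

theorem mul_norm_le {δ : ℝ} (hδ : 0 ≤ δ) (hprox : IsProximal T W Z δ) {w : U} (hw : w ∈ W) :
    (1 - δ) * ‖T (u - w₀)‖ ≤ ‖T (u - w)‖ := by
  have hzW := W.sub_mem hw hw₀
  have horth : ⟪T (u - w₀), Z.starProjection (T (w - w₀))⟫_ℝ = 0 := by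
    rw [← Z.inner_starProjection_left_eq_right, real_inner_comm]
    exact hgal _ hzW
  have htri : ‖T (u - w₀)‖ ≤ ‖T (u - w)‖ + δ * ‖T (w - w₀)‖ :=
    calc ‖T (u - w₀)‖ ≤ ‖T (u - w₀) - Z.starProjection (T (w - w₀))‖ :=
          norm_le_norm_sub_of_inner_eq_zero horth
      _ ≤ ‖T (u - w₀) - T (w - w₀)‖ + ‖T (w - w₀) - Z.starProjection (T (w - w₀))‖ :=
          norm_sub_le_norm_sub_add_norm_sub _ _ _
      _ ≤ ‖T (u - w)‖ + δ * ‖T (w - w₀)‖ := by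
          rw [← map_sub, sub_sub_sub_cancel_right]
          gcongr
          exact hprox _ hzW
  have hcoer : (1 - δ) * ‖T (w - w₀)‖ ≤ ‖T (u - w)‖ :=
    (hprox.mul_norm_le_norm_starProjection hzW).trans (hgal.norm_starProjection_sub_le hw₀ hw)
  rcases le_or_gt δ 1 with hδ1 | hδ1
  · nlinarith [mul_le_mul_of_nonneg_left htri (sub_nonneg.2 hδ1),
      mul_le_mul_of_nonneg_left hcoer hδ]
  · exact (mul_nonpos_of_nonpos_of_nonneg (by linarith) (norm_nonneg _)).trans (norm_nonneg _)

end IsGalerkinSolution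

end Saddle

section Riesz

variable {U V : Type*} [AddCommGroup U] [Module ℝ U] [NormedAddCommGroup V]
  [InnerProductSpace ℝ V] [CompleteSpace V] (B : U →ₗ[ℝ] StrongDual ℝ V)

/-- `R_V ∘ B`. -/
noncomputable def rieszComp : U →ₗ[ℝ] V where
  toFun w := (toDual ℝ V).symm (B w)
  map_add' := by simp
  map_smul' := by simp

theorem inner_rieszComp (w : U) (v : V) : ⟪rieszComp B w, v⟫_ℝ = B w v :=
  toDual_symm_apply

theorem norm_rieszComp (w : U) : ‖rieszComp B w‖ = ‖B w‖ :=
  (toDual ℝ V).symm.norm_map (B w)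

theorem rieszComp_injective (hB : Function.Injective B) : Function.Injective (rieszComp B) :=
  (toDual ℝ V).symm.injective.comp hB

end Riesz

theorem delta_proximal_saddle_quasi_optimality_general
    {U V : Type*} [NormedAddCommGroup U] [InnerProductSpace ℝ U]
    [NormedAddCommGroup V] [InnerProductSpace ℝ V] [CompleteSpace V]
    (B : U ≃L[ℝ] (V →L[ℝ] ℝ)) (f : V →L[ℝ] ℝ) (u : U) (hu : B u = f)
    (W : Submodule ℝ U) [FiniteDimensional ℝ W]
    (Z : Submodule ℝ V) [FiniteDimensional ℝ Z]
    (δ : ℝ) (hδ0 : 0 < δ) (hδ1 : δ < 1)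
    (hprox : ∀ w ∈ W,
      ‖(toDual ℝ V).symm (B w) - (Z.orthogonalProjectionOnto ((toDual ℝ V).symm (B w)) : V)‖ ≤
        δ * ‖(toDual ℝ V).symm (B w)‖) :
    ∃ uWZ rWZ, uWZ ∈ W ∧ rWZ ∈ Z ∧
      ((∀ v ∈ Z, ⟪rWZ, v⟫_ℝ + (B uWZ) v = f v) ∧ ∀ w ∈ W, (B w) rWZ = 0) ∧
      (∀ u' r', u' ∈ W → r' ∈ Z →
        ((∀ v ∈ Z, ⟪r', v⟫_ℝ + (B u') v = f v) ∧ ∀ w ∈ W, (B w) r' = 0) →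
          u' = uWZ ∧ r' = rWZ) ∧
      ‖B (u - uWZ)‖ ≤ (1 - δ)⁻¹ * (⨅ w : W, ‖B (u - (w : U))‖) ∧
      ‖B (u - uWZ)‖ + ‖rWZ‖ ≤ 2 * (1 - δ)⁻¹ * (⨅ w : W, ‖B (u - (w : U))‖) := by
  set T := rieszComp (B : U →ₗ[ℝ] StrongDual ℝ V)
  have hprox' : IsProximal T W Z δ := hprox
  have hsaddle : ∀ {w₀ r}, r ∈ Z →
      (((∀ v ∈ Z, ⟪r, v⟫_ℝ + (B w₀) v = f v) ∧ ∀ w ∈ W, (B w) r = 0) ↔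
        r = Z.starProjection (T (u - w₀)) ∧ IsGalerkinSolution T W Z u w₀) := fun hr => by
    rw [← isSaddleSolution_iff hr]
    simp only [IsSaddleSolution, T, inner_rieszComp, ← hu]
    rfl
  obtain ⟨uW, huW, hgal⟩ := exists_isGalerkinSolution (T := T) (W := W) (Z := Z) u
  refine ⟨uW, Z.starProjection (T (u - uW)), huW, Z.starProjection_apply_mem _,
    (hsaddle (Z.starProjection_apply_mem _)).2 ⟨rfl, hgal⟩, ?_, ?_⟩
  · rintro u' r' hu' hr' h
    obtain ⟨rfl, hgal'⟩ := (hsaddle hr').1 h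
    obtain rfl := hprox'.isGalerkinSolution_unique hδ1 (rieszComp_injective _ B.injective)
      hu' huW hgal' hgal
    exact ⟨rfl, rfl⟩
  have hTnorm : ∀ w, ‖T w‖ = ‖B w‖ := norm_rieszComp _
  have hpos : 0 < 1 - δ := sub_pos.2 hδ1
  have herr : ‖B (u - uW)‖ ≤ (1 - δ)⁻¹ * ⨅ w : W, ‖B (u - w)‖ :=
    (le_inv_mul_iff₀ hpos).2 <| le_ciInf fun w => by
      simpa only [hTnorm] using hgal.mul_norm_le huW hδ0.le hprox' w.2
  have hres : ‖Z.starProjection (T (u - uW))‖ ≤ ⨅ w : W, ‖B (u - w)‖ :=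
    le_ciInf fun w => by simpa only [hTnorm] using hgal.norm_starProjection_le huW w.2
  have hinf : ⨅ w : W, ‖B (u - w)‖ ≤ (1 - δ)⁻¹ * ⨅ w : W, ‖B (u - w)‖ :=
    le_mul_of_one_le_left (Real.iInf_nonneg fun _ => norm_nonneg _)
      ((one_le_inv₀ hpos).2 (by linarith))
  exact ⟨herr, by linarith⟩

/-- Theorem `thm:saddle` (ii): if `Z` is `δ`-proximal for `W`, i.e.
`‖(I − P_{V,Z}) R_V B w‖_V ≤ δ ‖R_V B w‖_V` for all `w ∈ W`, then the discrete saddle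
point problem has a unique solution `(u_{W,Z}, r_{W,Z}) ∈ W × Z` and, with
`‖w‖_Û := ‖Bw‖_{V'}`,
`‖u − u_{W,Z}‖_Û ≤ (1−δ)⁻¹ inf_{w∈W} ‖u − w‖_Û` and
`‖u − u_{W,Z}‖_Û + ‖r_{W,Z}‖_V ≤ 2(1−δ)⁻¹ inf_{w∈W} ‖u − w‖_Û`. -/
theorem delta_proximal_saddle_quasi_optimality
    {U V : Type*} [NormedAddCommGroup U] [InnerProductSpace ℝ U] [CompleteSpace U]
    [NormedAddCommGroup V] [InnerProductSpace ℝ V] [CompleteSpace V]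
    (B : U ≃L[ℝ] (V →L[ℝ] ℝ)) (f : V →L[ℝ] ℝ) (u : U) (hu : B u = f)
    (W : Submodule ℝ U) [FiniteDimensional ℝ W]
    (Z : Submodule ℝ V) [FiniteDimensional ℝ Z]
    (δ : ℝ) (hδ0 : 0 < δ) (hδ1 : δ < 1)
    (hprox : ∀ w ∈ W,
      ‖(toDual ℝ V).symm (B w) - (Z.orthogonalProjectionOnto ((toDual ℝ V).symm (B w)) : V)‖ ≤
        δ * ‖(toDual ℝ V).symm (B w)‖) :
    ∃ uWZ rWZ, uWZ ∈ W ∧ rWZ ∈ Z ∧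
      ((∀ v ∈ Z, ⟪rWZ, v⟫_ℝ + (B uWZ) v = f v) ∧ ∀ w ∈ W, (B w) rWZ = 0) ∧
      (∀ u' r', u' ∈ W → r' ∈ Z →
        ((∀ v ∈ Z, ⟪r', v⟫_ℝ + (B u') v = f v) ∧ ∀ w ∈ W, (B w) r' = 0) →
          u' = uWZ ∧ r' = rWZ) ∧
      ‖B (u - uWZ)‖ ≤ (1 - δ)⁻¹ * (⨅ w : W, ‖B (u - (w : U))‖) ∧
      ‖B (u - uWZ)‖ + ‖rWZ‖ ≤ 2 * (1 - δ)⁻¹ * (⨅ w : W, ‖B (u - (w : U))‖) :=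
  delta_proximal_saddle_quasi_optimality_general B f u hu W Z δ hδ0 hδ1 hprox
end

section
/- Let W ⊂ U and Z ⊂ V be finite-dimensional subspaces and δ ∈ (0,1). Then Z is δ-proximal for W if and only if inf_{w∈W, w≠0} sup_{v∈Z, v≠0} b(w,v)/(‖w‖_{Û} ‖v‖_V) ≥ √(1 − δ²). -/
/-!
Write `r := R_V B w`, so that `b(w, v) = ⟪r, v⟫` and `‖w‖_Û = ‖r‖`. The supremum over `Z` of
`⟪r, v⟫ / (‖r‖ ‖v‖)` equals `‖P_Z r‖ / ‖r‖`: Cauchy–Schwarz bounds it after replacing `r` by `P_Z r`,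
and `v = P_Z r` attains the bound. By Pythagoras `‖r - P_Z r‖² = ‖r‖² - ‖P_Z r‖²`, so
`‖r - P_Z r‖ ≤ δ ‖r‖` says exactly that `‖P_Z r‖ / ‖r‖ ≥ √(1 - δ²)`; take the infimum over `w`.
-/

open InnerProductSpace RealInnerProductSpace

namespace Submodule

variable {V : Type*} [NormedAddCommGroup V] [InnerProductSpace ℝ V]
  (Z : Submodule ℝ V) [Z.HasOrthogonalProjection]

theorem real_inner_starProjection_left_of_mem (r : V) {v : V} (hv : v ∈ Z) :
    ⟪Z.starProjection r, v⟫ = ⟪r, v⟫ := by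
  rw [inner_starProjection_left_eq_right, starProjection_eq_self_iff.mpr hv]

theorem norm_sub_starProjection_sq (r : V) :
    ‖r - Z.starProjection r‖ ^ 2 = ‖r‖ ^ 2 - ‖Z.starProjection r‖ ^ 2 := by
  rw [norm_sq_eq_add_norm_sq_starProjection r Z, starProjection_orthogonal_val]
  ring

theorem real_inner_div_norm_mul_norm_le_norm_starProjection_div (r : V) {v : V} (hv : v ∈ Z) :
    ⟪r, v⟫ / (‖r‖ * ‖v‖) ≤ ‖Z.starProjection r‖ / ‖r‖ := by
  rcases eq_or_ne v 0 with rfl | hv0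
  · simp only [inner_zero_right, norm_zero, mul_zero, div_zero]
    positivity
  calc ⟪r, v⟫ / (‖r‖ * ‖v‖) = ⟪Z.starProjection r, v⟫ / (‖r‖ * ‖v‖) := by
        rw [real_inner_starProjection_left_of_mem Z r hv]
    _ ≤ ‖Z.starProjection r‖ * ‖v‖ / (‖r‖ * ‖v‖) := by
        gcongr
        exact real_inner_le_norm _ _
    _ = ‖Z.starProjection r‖ / ‖r‖ := mul_div_mul_right _ _ (norm_ne_zero_iff.mpr hv0)

theorem iSup_real_inner_div_norm_mul_norm (r : V) :
    ⨆ v : {v : V // v ∈ Z ∧ v ≠ 0}, ⟪r, v.1⟫ / (‖r‖ * ‖v.1‖) = ‖Z.starProjection r‖ / ‖r‖ := by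
  rcases eq_or_ne (Z.starProjection r) 0 with hp | hp
  · rw [hp, norm_zero, zero_div]
    convert Real.iSup_const_zero with v
    rw [← real_inner_starProjection_left_of_mem Z r v.2.1, hp, inner_zero_left, zero_div]
  · have hr : r ≠ 0 := by
      rintro rfl
      simp at hp
    have hbdd : BddAbove (Set.range fun v : {v : V // v ∈ Z ∧ v ≠ 0} =>
        ⟪r, v.1⟫ / (‖r‖ * ‖v.1‖)) :=
      ⟨_, Set.forall_mem_range.2 fun v => real_inner_div_norm_mul_norm_le_norm_starProjection_div Z r v.2.1⟩
    have : Nonempty {v : V // v ∈ Z ∧ v ≠ 0} := ⟨⟨_, starProjection_apply_mem Z r, hp⟩⟩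
    refine le_antisymm (ciSup_le fun v => real_inner_div_norm_mul_norm_le_norm_starProjection_div Z r v.2.1)
      (le_ciSup_of_le hbdd ⟨_, starProjection_apply_mem Z r, hp⟩ (le_of_eq ?_))
    rw [← real_inner_starProjection_left_of_mem Z r (starProjection_apply_mem Z r),
      real_inner_self_eq_norm_sq]
    field_simp [norm_ne_zero_iff.mpr hp, norm_ne_zero_iff.mpr hr]

theorem norm_sub_starProjection_le_iff {r : V} (hr : r ≠ 0) {δ : ℝ} (hδ : 0 ≤ δ) :
    ‖r - Z.starProjection r‖ ≤ δ * ‖r‖ ↔ √(1 - δ ^ 2) ≤ ‖Z.starProjection r‖ / ‖r‖ := by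
  have hr' : 0 < ‖r‖ := norm_pos_iff.mpr hr
  -- `√(1 - δ²) ‖r‖ = √((1 - δ²) ‖r‖²)` also when `1 - δ² < 0`, so no case split on `δ ≤ 1`.
  rw [le_div_iff₀ hr', ← Real.sqrt_sq hr'.le, ← Real.sqrt_mul' _ (sq_nonneg _),
    Real.sqrt_sq hr'.le, Real.sqrt_le_left (norm_nonneg _),
    ← sq_le_sq₀ (norm_nonneg _) (by positivity), mul_pow, norm_sub_starProjection_sq]
  constructor <;> intro h <;> linarith

end Submodule

theorem delta_proximal_iff_infsup_general
    {U V : Type*} [NormedAddCommGroup U] [InnerProductSpace ℝ U]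
    [NormedAddCommGroup V] [InnerProductSpace ℝ V] [CompleteSpace V]
    (B : U ≃L[ℝ] (V →L[ℝ] ℝ))
    (W : Submodule ℝ U) (hW : W ≠ ⊥)
    (Z : Submodule ℝ V) [FiniteDimensional ℝ Z]
    (δ : ℝ) (hδ0 : 0 < δ) :
    (∀ w ∈ W,
      ‖(toDual ℝ V).symm (B w) - (Submodule.orthogonalProjectionOnto Z ((toDual ℝ V).symm (B w)) : V)‖ ≤
        δ * ‖(toDual ℝ V).symm (B w)‖) ↔
      Real.sqrt (1 - δ ^ 2) ≤
        ⨅ w : {w : U // w ∈ W ∧ w ≠ 0}, ⨆ v : {v : V // v ∈ Z ∧ v ≠ 0},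
          (B w.1) v.1 / (‖B w.1‖ * ‖v.1‖) := by
  set r : U → V := fun w => (toDual ℝ V).symm (B w)
  have hr : ∀ {w}, w ≠ 0 → r w ≠ 0 := by simp [r]
  have hsup : ∀ w, ⨆ v : {v : V // v ∈ Z ∧ v ≠ 0}, (B w) v.1 / (‖B w‖ * ‖v.1‖) =
      ‖Z.starProjection (r w)‖ / ‖r w‖ := fun w => by
    simpa [r, toDual_symm_apply] using Z.iSup_real_inner_div_norm_mul_norm (r w)
  obtain ⟨w₀, hw₀, hw₀0⟩ := Submodule.exists_mem_ne_zero_of_ne_bot hW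
  have : Nonempty {w : U // w ∈ W ∧ w ≠ 0} := ⟨⟨w₀, hw₀, hw₀0⟩⟩
  rw [le_ciInf_iff ⟨0, Set.forall_mem_range.2 fun w => by rw [hsup]; positivity⟩]
  simp only [hsup, ← Submodule.starProjection_apply]
  refine ⟨fun h w => (Z.norm_sub_starProjection_le_iff (hr w.2.2) hδ0.le).1 (h w.1 w.2.1),
    fun h w hw => ?_⟩
  rcases eq_or_ne w 0 with rfl | hw0
  · simp
  · exact (Z.norm_sub_starProjection_le_iff (hr hw0) hδ0.le).2 (h ⟨w, hw, hw0⟩)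

/-- Theorem `thm:saddle` (iii): `Z` is `δ`-proximal for `W`, i.e.
`‖(I − P_{V,Z}) R_V B w‖_V ≤ δ ‖R_V B w‖_V` for all `w ∈ W`, iff the inf-sup constant
of the pair `(W, Z)` with respect to the renormed trial norm `‖w‖_Û := ‖Bw‖_{V'}`
satisfies `inf_{w∈W, w≠0} sup_{v∈Z, v≠0} b(w,v)/(‖w‖_Û ‖v‖_V) ≥ √(1 − δ²)`. -/
theorem delta_proximal_iff_infsup
    {U V : Type*} [NormedAddCommGroup U] [InnerProductSpace ℝ U] [CompleteSpace U]
    [NormedAddCommGroup V] [InnerProductSpace ℝ V] [CompleteSpace V]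
    (B : U ≃L[ℝ] (V →L[ℝ] ℝ))
    (W : Submodule ℝ U) [FiniteDimensional ℝ W] (hW : W ≠ ⊥)
    (Z : Submodule ℝ V) [FiniteDimensional ℝ Z]
    (δ : ℝ) (hδ0 : 0 < δ) (hδ1 : δ < 1) :
    (∀ w ∈ W,
      ‖(toDual ℝ V).symm (B w) - (Submodule.orthogonalProjectionOnto Z ((toDual ℝ V).symm (B w)) : V)‖ ≤
        δ * ‖(toDual ℝ V).symm (B w)‖) ↔
      Real.sqrt (1 - δ ^ 2) ≤
        ⨅ w : {w : U // w ∈ W ∧ w ≠ 0}, ⨆ v : {v : V // v ∈ Z ∧ v ≠ 0},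
          (B w.1) v.1 / (‖B w.1‖ * ‖v.1‖) :=
  delta_proximal_iff_infsup_general B W hW Z δ hδ0
end

section
/- Let ℓ ∈ U', let z ∈ V solve the dual problem b(w, z) = −ℓ(w) for all w ∈ U, and for ū ∈ U, z̄ ∈ V define the primal residual r(ū, v) := ⟨f, v⟩ − b(ū, v) and the corrected output ℓ̂(ū) := ℓ(ū) − r(ū, z̄). Then ℓ̂(ū) − ℓ(u) = b(u − ū, z − z̄), and consequently |ℓ̂(ū) − ℓ(u)| ≤ C_b ‖u − ū‖_U ‖z − z̄‖_V. -/
/-- primal-dual output correction: with the dual solution `z` of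
`b(w,z) = −ℓ(w) ∀ w ∈ U`, the primal residual `r(ū,v) := ⟨f,v⟩ − b(ū,v)` and the
corrected output `ℓ̂(ū) := ℓ(ū) − r(ū, z̄)`, one has
`ℓ̂(ū) − ℓ(u) = b(u − ū, z − z̄)`, hence `|ℓ̂(ū) − ℓ(u)| ≤ C_b ‖u − ū‖_U ‖z − z̄‖_V`. -/
theorem dual_weighted_residual_output_error
    {U V : Type*} [NormedAddCommGroup U] [InnerProductSpace ℝ U] [CompleteSpace U]
    [NormedAddCommGroup V] [InnerProductSpace ℝ V] [CompleteSpace V]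
    (b : U →ₗ[ℝ] V →ₗ[ℝ] ℝ) (Cb : ℝ)
    (hbdd : ∀ (w : U) (v : V), |b w v| ≤ Cb * ‖w‖ * ‖v‖)
    (f : V →L[ℝ] ℝ) (u : U) (hu : ∀ v : V, b u v = f v)
    (l : U →L[ℝ] ℝ) (z : V) (hz : ∀ w : U, b w z = -(l w))
    (ub : U) (zb : V) :
    (l ub - (f zb - b ub zb)) - l u = b (u - ub) (z - zb) ∧
      |(l ub - (f zb - b ub zb)) - l u| ≤ Cb * ‖u - ub‖ * ‖z - zb‖ := by
  have key : (l ub - (f zb - b ub zb)) - l u = b (u - ub) (z - zb) := by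
    have h1 : b (u - ub) (z - zb)
        = b u z - b u zb - b ub z + b ub zb := by
      simp [map_sub, LinearMap.sub_apply]; ring
    rw [h1, hu zb, hz u, hz ub]; ring
  refine ⟨key, ?_⟩
  rw [key]; exact hbdd _ _
end
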